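/- arXiv:2311.16077 — 2 statements merged into one kernel-verified Lean document; each statement's English description precedes it below -/
import Mathlib

section
/- Let u : R^3 → R^3 be a smooth vector field and let x₀ ∈ R^3. If all second-order partial derivatives of dev def u vanish at x₀ (i.e., D^β(dev def u)(x₀) = 0 for all multi-indices |β| = 2), then all third-order partial derivatives of u vanish at x₀ (D^α u(x₀) = 0 for all |α| = 3). -/
open Matrix MeasureTheory

noncomputable section

abbrev V3 : Type := Fin 3 → ℝ
abbrev M3 : Type := Matrix (Fin 3) (Fin 3) ℝ

/-- `mskw a` is the skew-symmetric matrix with `mskw a *ᵥ b = a ×₃ b`. -/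
def mskw (a : V3) : M3 :=
  !![0, -a 2, a 1; a 2, 0, -a 0; -a 1, a 0, 0]

/-- Partial derivative `∂_j f` at `x`. -/
def pd (j : Fin 3) (f : V3 → ℝ) (x : V3) : ℝ :=
  fderiv ℝ f x (Pi.single j 1)

/-- Curl of a vector field. -/
def curlVec (v : V3 → V3) (x : V3) : V3 :=
  ![pd 1 (fun y => v y 2) x - pd 2 (fun y => v y 1) x,
    pd 2 (fun y => v y 0) x - pd 0 (fun y => v y 2) x,
    pd 0 (fun y => v y 1) x - pd 1 (fun y => v y 0) x]

/-- Row-wise curl of a matrix field. -/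
def curlMat (U : V3 → M3) (x : V3) : M3 :=
  Matrix.of fun i j => curlVec (fun y => U y i) x j

/-- `S U = Uᵀ - tr U • I`. -/
def Smap (U : M3) : M3 := Uᵀ - U.trace • (1 : M3)

/-- `S⁻¹ U = Uᵀ - (1/2) tr U • I`. -/
def Sinv (U : M3) : M3 := Uᵀ - ((2:ℝ)⁻¹ * U.trace) • (1 : M3)

/-- Symmetric part. -/
def symPart (U : M3) : M3 := (2:ℝ)⁻¹ • (U + Uᵀ)

/-- Deviatoric (trace-free) part. -/
def devPart (U : M3) : M3 := U - ((3:ℝ)⁻¹ * U.trace) • (1 : M3)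

/-- Row-wise gradient of a vector field: `(grad v)_{ij} = ∂_j v_i`. -/
def gradMat (v : V3 → V3) (x : V3) : M3 :=
  Matrix.of fun i j => pd j (fun y => v y i) x

/-- Symmetric gradient `def v`. -/
def defSym (v : V3 → V3) (x : V3) : M3 := symPart (gradMat v x)

/-- Incompatibility operator `inc U = curl S⁻¹ curl U`. -/
def incMat (U : V3 → M3) (x : V3) : M3 :=
  curlMat (fun y => Sinv (curlMat U y)) x

/-- Linearized Cotton–York operator `cinc U = curl S⁻¹ curl S⁻¹ curl U`. -/
def cincMat (U : V3 → M3) (x : V3) : M3 :=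
  curlMat (fun y => Sinv (incMat U y)) x

/-- `divdiv U = Σ_{ij} ∂_i ∂_j U_{ij}`. -/
def divdiv (U : V3 → M3) (x : V3) : ℝ :=
  ∑ i, ∑ j, pd i (fun y => pd j (fun z => U z i j) y) x

/-- Conformal Killing field `(x·x)a - 2(a·x)x + b×x + cx + d`. -/
def CKfield (a b d : V3) (c : ℝ) : V3 → V3 :=
  fun x => (x ⬝ᵥ x) • a - (2 * (a ⬝ᵥ x)) • x + crossProduct b x + c • x + d

/-- Entry `(def u)_{ij}` of the symmetric gradient. -/
def defEntry (u : V3 → V3) (i j : Fin 3) (x : V3) : ℝ :=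
  (pd j (fun y => u y i) x + pd i (fun y => u y j) x) / 2

/-- Entry `(dev def u)_{ij}`. -/
def devDefEntry (u : V3 → V3) (i j : Fin 3) (x : V3) : ℝ :=
  defEntry u i j x - (if i = j then (3:ℝ)⁻¹ * ∑ k, pd k (fun y => u y k) x else 0)

/-- Iterated partial derivative along a list of directions. -/
def pds : List (Fin 3) → (V3 → ℝ) → V3 → ℝ
  | [], f => f
  | i :: l, f => pd i (pds l f)

/-- Orthogonal projection of `v` onto the plane with unit normal `n`. -/
def projV (n v : V3) : V3 := v - (n ⬝ᵥ v) • n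

/-- Row-wise cross product `U × n`. -/
def rowCross (U : M3) (n : V3) : M3 := Matrix.of fun i => crossProduct (U i) n

/-- Row-wise projection `U Π`. -/
def rowProj (U : M3) (n : V3) : M3 := Matrix.of fun i => projV n (U i)

/-- Frobenius inner product. -/
def frob (A B : M3) : ℝ := ∑ i, ∑ j, A i j * B i j

/-- Projection matrix `Π = I - n nᵀ`. -/
def Pmat (n : V3) : M3 := 1 - vecMulVec n n

/-- `sym curl σ`. -/
def symCurl (σ : V3 → M3) (x : V3) : M3 := symPart (curlMat σ x)

/-- Tangential partial derivative `(Π∇)_i f`. -/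
def pdF (n : V3) (i : Fin 3) (f : V3 → ℝ) (x : V3) : ℝ :=
  pd i f x - n i * ∑ k, n k * pd k f x

/-- Row-wise surface gradient of a vector field. -/
def gradFMat (n : V3) (u : V3 → V3) (x : V3) : M3 :=
  Matrix.of fun i j => pdF n j (fun y => u y i) x

/-- Surface symmetric gradient `def_F u`. -/
def defF (n : V3) (u : V3 → V3) (x : V3) : M3 := symPart (gradFMat n u x)

/-- Normal derivative of a matrix field, entrywise. -/
def dnMat (n : V3) (τ : V3 → M3) (x : V3) : M3 :=
  Matrix.of fun i j => fderiv ℝ (fun y => τ y i j) x n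

/-- `tr₁ σ = sym(Π σ × n)`. -/
def tr1 (n : V3) (σ : V3 → M3) (x : V3) : M3 :=
  symPart (rowCross (Pmat n * σ x) n)

/-- `tr₃ σ = 2 def_F(n·(sym curl σ)Π) - Π ∂ₙ(sym curl σ) Π`. -/
def tr3 (n : V3) (σ : V3 → M3) (x : V3) : M3 :=
  (2:ℝ) • defF n (fun y => projV n (Matrix.vecMul n (symCurl σ y))) x -
    Pmat n * dnMat n (symCurl σ) x * Pmat n

/-- `div_F div_F U`. -/
def divFdivF (n : V3) (U : V3 → M3) (x : V3) : ℝ :=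
  ∑ i, ∑ j, pdF n i (fun y => pdF n j (fun z => U z i j) y) x

lemma contDiff_pd {f : V3 → ℝ} (hf : ContDiff ℝ (⊤ : ℕ∞) f) (j : Fin 3) :
    ContDiff ℝ (⊤ : ℕ∞) (pd j f) :=
  (hf.fderiv_right (by simp)).clm_apply contDiff_const

lemma pd_swap {f : V3 → ℝ} (hf : ContDiff ℝ (⊤ : ℕ∞) f) (i j : Fin 3) (x : V3) :
    pd i (pd j f) x = pd j (pd i f) x := by
  have hsym := (hf.contDiffAt (x := x)).isSymmSndFDerivAt
    (by rw [minSmoothness_of_isRCLikeNormedField]; exact WithTop.coe_le_coe.mpr le_top)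
  have hd : ContDiff ℝ (⊤ : ℕ∞) (fderiv ℝ f) := hf.fderiv_right (by simp)
  have key : ∀ a b : Fin 3, pd a (pd b f) x
      = fderiv ℝ (fderiv ℝ f) x (Pi.single a 1) (Pi.single b 1) := by
    intro a b
    show fderiv ℝ (fun y => fderiv ℝ f y (Pi.single b 1)) x (Pi.single a 1) = _
    rw [fderiv_clm_apply (hd.differentiable (by simp) x) (differentiableAt_const _)]
    simp
  rw [key, key, hsym]

lemma pd_lincomb {A B : V3 → ℝ} {C : Fin 3 → V3 → ℝ}
    (hA : ContDiff ℝ (⊤ : ℕ∞) A) (hB : ContDiff ℝ (⊤ : ℕ∞) B) (hC : ∀ m, ContDiff ℝ (⊤ : ℕ∞) (C m))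
    (c : ℝ) (j : Fin 3) (x : V3) :
    pd j (fun y => (2:ℝ)⁻¹ * (A y + B y) - c * ∑ m, C m y) x
      = (2:ℝ)⁻¹ * (pd j A x + pd j B x) - c * ∑ m, pd j (C m) x := by
  have hA' := (hA.differentiable (by simp) x).hasFDerivAt
  have hB' := (hB.differentiable (by simp) x).hasFDerivAt
  have hC' : ∀ m : Fin 3, HasFDerivAt (C m) (fderiv ℝ (C m) x) x :=
    fun m => ((hC m).differentiable (by simp) x).hasFDerivAt
  have H : HasFDerivAt (fun y => (2:ℝ)⁻¹ * (A y + B y) - c * ∑ m, C m y)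
      ((2:ℝ)⁻¹ • (fderiv ℝ A x + fderiv ℝ B x) - c • ∑ m : Fin 3, fderiv ℝ (C m) x) x :=
    ((hA'.add hB').const_mul _).sub ((HasFDerivAt.fun_sum fun m _ => hC' m).const_mul _)
  show fderiv ℝ _ x _ = _
  rw [H.fderiv]
  simp [pd, Finset.sum_apply']
  ring

/-- if all second partials of `dev def u` vanish at `x₀`, then all
third partials of `u` vanish at `x₀`. -/
theorem third_derivs_vanish_of_devDef (u : V3 → V3) (hu : ContDiff ℝ (⊤ : ℕ∞) u) (x₀ : V3)
    (h : ∀ i j k l : Fin 3, pd i (fun y => pd j (devDefEntry u k l) y) x₀ = 0) :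
    ∀ i j k m : Fin 3,
      pd i (fun y => pd j (fun z => pd k (fun w => u w m) z) y) x₀ = 0 := by
  have hum : ∀ m : Fin 3, ContDiff ℝ (⊤ : ℕ∞) (fun w => u w m) := fun m => contDiff_pi.mp hu m
  set t : Fin 3 → Fin 3 → Fin 3 → Fin 3 → ℝ :=
    fun i j k l => pd i (pd j (pd k (fun w => u w l))) x₀ with ht
  -- expansion of devDefEntry
  have hdev : ∀ k l : Fin 3, devDefEntry u k l = fun y =>
      (2:ℝ)⁻¹ * (pd l (fun w => u w k) y + pd k (fun w => u w l) y)
        - (if k = l then (3:ℝ)⁻¹ else 0) * ∑ m, pd m (fun w => u w m) y := by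
    intro k l; funext y
    by_cases hkl : k = l <;>
      simp [devDefEntry, defEntry, hkl, div_eq_inv_mul, mul_comm]
  have hexp : ∀ i j k l : Fin 3,
      (2:ℝ)⁻¹ * (t i j l k + t i j k l)
        - (if k = l then (3:ℝ)⁻¹ else 0) * ∑ m, t i j m m = 0 := by
    intro i j k l
    have e1 : pd j (devDefEntry u k l) = fun y =>
        (2:ℝ)⁻¹ * (pd j (pd l (fun w => u w k)) y + pd j (pd k (fun w => u w l)) y)
          - (if k = l then (3:ℝ)⁻¹ else 0) * ∑ m, pd j (pd m (fun w => u w m)) y := by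
      funext y
      rw [hdev k l]
      exact pd_lincomb (contDiff_pd (hum k) l) (contDiff_pd (hum l) k)
        (fun m => contDiff_pd (hum m) m) _ j y
    have e2 := h i j k l
    rw [show (fun y => pd j (devDefEntry u k l) y) = pd j (devDefEntry u k l) from rfl,
      e1] at e2
    rw [pd_lincomb (contDiff_pd (contDiff_pd (hum k) l) j)
      (contDiff_pd (contDiff_pd (hum l) k) j)
      (fun m => contDiff_pd (contDiff_pd (hum m) m) j) _ i x₀] at e2
    exact e2
  -- symmetries
  have hsym23 : ∀ i j k l : Fin 3, t i j k l = t i k j l := by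
    intro i j k l
    have : pd j (pd k (fun w => u w l)) = pd k (pd j (fun w => u w l)) :=
      funext fun y => pd_swap (hum l) j k y
    simp only [ht, this]
  have hsym12 : ∀ i j k l : Fin 3, t i j k l = t j i k l := by
    intro i j k l
    exact pd_swap (contDiff_pd (hum l) k) i j x₀
  -- divergence second derivatives
  set s : Fin 3 → Fin 3 → ℝ := fun i j => ∑ m, t i j m m with hs
  have hssym : ∀ i j, s i j = s j i := by
    intro i j; simp only [hs]
    exact Finset.sum_congr rfl fun m _ => hsym12 i j m m
  have hrel : ∀ i j k l : Fin 3,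
      t i j l k + t i j k l = (if k = l then (2:ℝ)/3 * s i j else 0) := by
    intro i j k l
    have := hexp i j k l
    by_cases hkl : k = l <;> simp only [hkl, if_true, if_false, hs] at this ⊢ <;> linarith [this]
  set L : Fin 3 → Fin 3 → ℝ := fun i k => ∑ j, t i j j k with hL
  have hLs : ∀ i k, L i k = -(1/3) * s i k := by
    intro i k
    have h1 : ∑ j, (t i j j k + t i j k j) = ∑ j : Fin 3, (if k = j then (2:ℝ)/3 * s i j else 0) :=
      Finset.sum_congr rfl fun j _ => hrel i j k j
    rw [Finset.sum_ite_eq] at h1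
    simp only [Finset.mem_univ, if_true] at h1
    have h2 : ∑ j, t i j k j = s i k :=
      Finset.sum_congr rfl fun j _ => (hsym23 i j k j)
    rw [Finset.sum_add_distrib, h2] at h1
    have : L i k + s i k = 2/3 * s i k := h1
    linarith
  have hQ : ∀ k l : Fin 3, -(2:ℝ)/3 * s k l = (if k = l then (2:ℝ)/3 * ∑ i, s i i else 0) := by
    intro k l
    have h1 : ∑ i, (t i i l k + t i i k l) = ∑ i : Fin 3, (if k = l then (2:ℝ)/3 * s i i else 0) :=
      Finset.sum_congr rfl fun i _ => hrel i i k l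
    have h2 : ∑ i, t i i l k = L l k := by
      refine Finset.sum_congr rfl fun i _ => ?_
      rw [hsym23 i i l k, hsym12 i l i k]
    have h3 : ∑ i, t i i k l = L k l := by
      refine Finset.sum_congr rfl fun i _ => ?_
      rw [hsym23 i i k l, hsym12 i k i l]
    rw [Finset.sum_add_distrib, h2, h3, hLs, hLs, hssym l k] at h1
    by_cases hkl : k = l <;> simp only [hkl, if_true, if_false, ← Finset.mul_sum] at h1 ⊢ <;>
      linarith
  have hQ0 : (∑ i, s i i) = 0 := by
    have h1 : ∀ k : Fin 3, s k k = -(∑ i, s i i) := by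
      intro k
      have := hQ k k
      simp only [if_true] at this
      linarith
    have h2 : ∑ k, s k k = ∑ k : Fin 3, -(∑ i, s i i) := Finset.sum_congr rfl fun k _ => h1 k
    simp only [Finset.sum_const, Finset.card_univ, Fintype.card_fin, nsmul_eq_mul] at h2
    norm_num at h2
    linarith
  have hs0 : ∀ i j, s i j = 0 := by
    intro i j
    have h0 := hQ i j
    rw [hQ0] at h0
    simp only [mul_zero, ite_self] at h0
    linarith
  have hanti : ∀ i j k l : Fin 3, t i j l k = - t i j k l := by
    intro i j k l
    have h0 := hrel i j k l
    rw [hs0 i j] at h0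
    simp only [mul_zero, ite_self] at h0
    linarith
  intro i j k m
  show t i j k m = 0
  have c1 := hanti i j k m          -- t i j m k = - t i j k m
  have c2 := hsym23 i j m k         -- t i j m k = t i m j k
  have c3 := hanti i m k j          -- t i m j k = - t i m k j  ... hanti i m k j : t i m j k = - t i m k j
  have c4 := hsym23 i m k j         -- t i m k j = t i k m j
  have c5 := hanti i k j m          -- t i k m j = - t i k j m ... hanti i k j m : t i k m j = - t i k j m
  have c6 := hsym23 i k j m         -- t i k j m = t i j k m
  linarith
end
end

section
/- More generally, for any multi-index α with |α| ≥ 3 and any smooth vector field u : R^3 → R^3, each component of D^α u can be expressed as a fixed linear combination (with universal rational coefficients independent of u) of components of D^β(dev def u) over multi-indices β with |β| = |α| - 1. -/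
open Matrix MeasureTheory

noncomputable section

lemma pd_comm {f : V3 → ℝ} (hf : ContDiff ℝ (⊤ : ℕ∞) f) (i j : Fin 3) :
    pd i (pd j f) = pd j (pd i f) := by
  funext x
  have hsym : IsSymmSndFDerivAt ℝ f x := (hf.contDiffAt).isSymmSndFDerivAt (by simp; exact WithTop.coe_le_coe.mpr le_top)
  have key : ∀ (a b : Fin 3), pd a (pd b f) x
      = fderiv ℝ (fderiv ℝ f) x (Pi.single a 1) (Pi.single b 1) := by
    intro a b
    have hdf : DifferentiableAt ℝ (fderiv ℝ f) x :=
      ((hf.fderiv_right (m := (⊤ : ℕ∞)) (by simp)).differentiable (by simp)).differentiableAt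
    show fderiv ℝ (fun y => fderiv ℝ f y (Pi.single b 1)) x (Pi.single a 1) = _
    rw [fderiv_clm_apply hdf (differentiableAt_const _)]
    simp
  rw [key, key, hsym]


lemma contDiff_pds {f : V3 → ℝ} (hf : ContDiff ℝ (⊤ : ℕ∞) f) (l : List (Fin 3)) :
    ContDiff ℝ (⊤ : ℕ∞) (pds l f) := by
  induction l with
  | nil => exact hf
  | cons i l ih => exact contDiff_pd ih i

lemma pds_append (l₁ l₂ : List (Fin 3)) (f : V3 → ℝ) :
    pds (l₁ ++ l₂) f = pds l₁ (pds l₂ f) := by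
  induction l₁ with
  | nil => rfl
  | cons i l ih => simp [pds, ih]

lemma pd_comb {f g : V3 → ℝ} {x : V3} (hf : DifferentiableAt ℝ f x)
    (hg : DifferentiableAt ℝ g x) (c₁ c₂ : ℝ) (j : Fin 3) :
    pd j (fun y => c₁ * f y + c₂ * g y) x = c₁ * pd j f x + c₂ * pd j g x := by
  unfold pd
  rw [fderiv_fun_add ((hf.const_mul c₁)) ((hg.const_mul c₂)), fderiv_const_mul hf,
    fderiv_const_mul hg]
  simp

lemma contDiff_comb {f g : V3 → ℝ} (hf : ContDiff ℝ (⊤ : ℕ∞) f) (hg : ContDiff ℝ (⊤ : ℕ∞) g) (c₁ c₂ : ℝ) :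
    ContDiff ℝ (⊤ : ℕ∞) (fun y => c₁ * f y + c₂ * g y) :=
  ((contDiff_const (c := c₁)).mul hf).add ((contDiff_const (c := c₂)).mul hg)

lemma pds_comb {f g : V3 → ℝ} (hf : ContDiff ℝ (⊤ : ℕ∞) f) (hg : ContDiff ℝ (⊤ : ℕ∞) g) (c₁ c₂ : ℝ)
    (l : List (Fin 3)) (x : V3) :
    pds l (fun y => c₁ * f y + c₂ * g y) x = c₁ * pds l f x + c₂ * pds l g x := by
  induction l generalizing x with
  | nil => rfl
  | cons i l ih =>
    show pd i (pds l fun y => c₁ * f y + c₂ * g y) x = _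
    have : (pds l fun y => c₁ * f y + c₂ * g y) = fun y => c₁ * pds l f y + c₂ * pds l g y :=
      funext fun y => ih y
    rw [this]
    exact pd_comb (((contDiff_pds hf l).differentiable (by simp)) x)
      (((contDiff_pds hg l).differentiable (by simp)) x) c₁ c₂ i

lemma pds_zero (l : List (Fin 3)) : pds l (fun _ => (0:ℝ)) = fun _ => (0:ℝ) := by
  induction l with
  | nil => rfl
  | cons i l ih =>
    show pd i (pds l fun _ => (0:ℝ)) = _
    rw [ih]; funext x; unfold pd; simp [fderiv_const]

lemma pds_sum {ι : Type*} (s : Finset ι) (F : ι → V3 → ℝ) (hF : ∀ i ∈ s, ContDiff ℝ (⊤ : ℕ∞) (F i))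
    (l : List (Fin 3)) (x : V3) :
    pds l (fun y => ∑ i ∈ s, F i y) x = ∑ i ∈ s, pds l (F i) x := by
  classical
  induction s using Finset.induction with
  | empty =>
    simp only [Finset.sum_empty]
    rw [pds_zero]
  | insert a s' hne ih =>
    simp only [Finset.sum_insert hne]
    have h1 : ContDiff ℝ (⊤ : ℕ∞) (F a) := hF a (Finset.mem_insert_self a s')
    have h2 : ContDiff ℝ (⊤ : ℕ∞) (fun y => ∑ i ∈ s', F i y) :=
      ContDiff.sum fun i hi => hF i (Finset.mem_insert_of_mem hi)
    have := pds_comb h1 h2 1 1 l x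
    simp only [one_mul] at this
    rw [this, ih (fun i hi => hF i (Finset.mem_insert_of_mem hi))]

def Uc (u : V3 → V3) (i : Fin 3) : V3 → ℝ := fun y => u y i
def dvg (u : V3 → V3) : V3 → ℝ := fun x => ∑ k, pd k (Uc u k) x

variable {u : V3 → V3}

lemma hUc (hu : ContDiff ℝ (⊤ : ℕ∞) u) (i : Fin 3) : ContDiff ℝ (⊤ : ℕ∞) (Uc u i) := contDiff_pi.mp hu i

lemma hdvg (hu : ContDiff ℝ (⊤ : ℕ∞) u) : ContDiff ℝ (⊤ : ℕ∞) (dvg u) :=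
  ContDiff.sum fun k _ => contDiff_pd (hUc hu k) k

lemma eps_eq (u : V3 → V3) (i j : Fin 3) : devDefEntry u i j =
    fun y => 2⁻¹ * pd j (Uc u i) y + 2⁻¹ * pd i (Uc u j) y
      + (if i = j then -(3⁻¹:ℝ) else 0) * dvg u y := by
  funext y
  unfold devDefEntry defEntry dvg
  unfold Uc
  split_ifs <;> ring

lemma hEps (hu : ContDiff ℝ (⊤ : ℕ∞) u) (i j : Fin 3) : ContDiff ℝ (⊤ : ℕ∞) (devDefEntry u i j) := by
  rw [eps_eq]
  exact (contDiff_comb (contDiff_pd (hUc hu i) j) (contDiff_pd (hUc hu j) i) _ _).add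
    (contDiff_const.mul (hdvg hu))

lemma pds_single (j : Fin 3) (f : V3 → ℝ) : pds [j] f = pd j f := rfl

lemma pds_comb3 {f g h : V3 → ℝ} (hf : ContDiff ℝ (⊤ : ℕ∞) f) (hg : ContDiff ℝ (⊤ : ℕ∞) g)
    (hh : ContDiff ℝ (⊤ : ℕ∞) h) (c₁ c₂ c₃ : ℝ) (l : List (Fin 3)) (x : V3) :
    pds l (fun y => c₁ * f y + c₂ * g y + c₃ * h y) x
      = c₁ * pds l f x + c₂ * pds l g x + c₃ * pds l h x := by
  have e : (fun y => c₁ * f y + c₂ * g y + c₃ * h y)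
      = fun y => (1:ℝ) * (c₁ * f y + c₂ * g y) + c₃ * h y := by funext y; ring
  rw [e, pds_comb (contDiff_comb hf hg c₁ c₂) hh 1 c₃ l x, pds_comb hf hg c₁ c₂ l x]
  ring

lemma pds_comb4 {f g h k : V3 → ℝ} (hf : ContDiff ℝ (⊤ : ℕ∞) f) (hg : ContDiff ℝ (⊤ : ℕ∞) g)
    (hh : ContDiff ℝ (⊤ : ℕ∞) h) (hk : ContDiff ℝ (⊤ : ℕ∞) k) (c₁ c₂ c₃ c₄ : ℝ) (l : List (Fin 3)) (x : V3) :
    pds l (fun y => c₁ * f y + c₂ * g y + c₃ * h y + c₄ * k y) x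
      = c₁ * pds l f x + c₂ * pds l g x + c₃ * pds l h x + c₄ * pds l k x := by
  have e : (fun y => c₁ * f y + c₂ * g y + c₃ * h y + c₄ * k y)
      = fun y => (1:ℝ) * (c₁ * f y + c₂ * g y) + (1:ℝ) * (c₃ * h y + c₄ * k y) := by
    funext y; ring
  rw [e, pds_comb (contDiff_comb hf hg c₁ c₂) (contDiff_comb hh hk c₃ c₄) 1 1 l x,
    pds_comb hf hg c₁ c₂ l x, pds_comb hh hk c₃ c₄ l x]
  ring

lemma pds_comb6 {f₁ f₂ f₃ f₄ f₅ f₆ : V3 → ℝ} (h₁ : ContDiff ℝ (⊤ : ℕ∞) f₁) (h₂ : ContDiff ℝ (⊤ : ℕ∞) f₂)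
    (h₃ : ContDiff ℝ (⊤ : ℕ∞) f₃) (h₄ : ContDiff ℝ (⊤ : ℕ∞) f₄) (h₅ : ContDiff ℝ (⊤ : ℕ∞) f₅) (h₆ : ContDiff ℝ (⊤ : ℕ∞) f₆)
    (c₁ c₂ c₃ c₄ c₅ c₆ : ℝ) (l : List (Fin 3)) (x : V3) :
    pds l (fun y => c₁ * f₁ y + c₂ * f₂ y + c₃ * f₃ y + c₄ * f₄ y + c₅ * f₅ y + c₆ * f₆ y) x
      = c₁ * pds l f₁ x + c₂ * pds l f₂ x + c₃ * pds l f₃ x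
        + c₄ * pds l f₄ x + c₅ * pds l f₅ x + c₆ * pds l f₆ x := by
  have e : (fun y => c₁ * f₁ y + c₂ * f₂ y + c₃ * f₃ y + c₄ * f₄ y + c₅ * f₅ y + c₆ * f₆ y)
      = fun y => (1:ℝ) * (c₁ * f₁ y + c₂ * f₂ y + c₃ * f₃ y)
          + (1:ℝ) * (c₄ * f₄ y + c₅ * f₅ y + c₆ * f₆ y) := by funext y; ring
  have hA : ContDiff ℝ (⊤ : ℕ∞) (fun y => c₁ * f₁ y + c₂ * f₂ y + c₃ * f₃ y) :=
    (contDiff_comb h₁ h₂ c₁ c₂).add (contDiff_const.mul h₃)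
  have hB : ContDiff ℝ (⊤ : ℕ∞) (fun y => c₄ * f₄ y + c₅ * f₅ y + c₆ * f₆ y) :=
    (contDiff_comb h₄ h₅ c₄ c₅).add (contDiff_const.mul h₆)
  rw [e, pds_comb hA hB 1 1 l x, pds_comb3 h₁ h₂ h₃ c₁ c₂ c₃ l x,
    pds_comb3 h₄ h₅ h₆ c₄ c₅ c₆ l x]
  ring

lemma pd_sum_fun {ι : Type*} (s : Finset ι) (F : ι → V3 → ℝ)
    (hF : ∀ i ∈ s, ContDiff ℝ (⊤ : ℕ∞) (F i)) (j : Fin 3) :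
    pd j (fun y => ∑ i ∈ s, F i y) = fun x => ∑ i ∈ s, pd j (F i) x := by
  funext x
  exact pds_sum s F hF [j] x

lemma pd_eps (hu : ContDiff ℝ (⊤ : ℕ∞) u) (a i j : Fin 3) :
    pd a (devDefEntry u i j) = fun x =>
      2⁻¹ * pd a (pd j (Uc u i)) x + 2⁻¹ * pd a (pd i (Uc u j)) x
        + (if i = j then -(3⁻¹:ℝ) else 0) * pd a (dvg u) x := by
  funext x
  rw [eps_eq]
  exact pds_comb3 (contDiff_pd (hUc hu i) j) (contDiff_pd (hUc hu j) i) (hdvg hu)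
    2⁻¹ 2⁻¹ _ [a] x

lemma second_deriv_eq (hu : ContDiff ℝ (⊤ : ℕ∞) u) (a b m : Fin 3) :
    pd a (pd b (Uc u m)) = fun x =>
      1 * pd a (devDefEntry u b m) x + 1 * pd b (devDefEntry u a m) x
        + (-1) * pd m (devDefEntry u a b) x
        + (if b = m then (3⁻¹:ℝ) else 0) * pd a (dvg u) x
        + (if a = m then (3⁻¹:ℝ) else 0) * pd b (dvg u) x
        + (if a = b then -(3⁻¹:ℝ) else 0) * pd m (dvg u) x := by
  funext x
  simp only [pd_eps hu]
  rw [pd_comm (hUc hu b) a m, pd_comm (hUc hu a) b m, pd_comm (hUc hu m) b a]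
  split_ifs <;> ring

lemma sum_pd_eps (hu : ContDiff ℝ (⊤ : ℕ∞) u) (i : Fin 3) :
    (fun x => ∑ j, pd j (devDefEntry u i j) x)
      = fun x => 2⁻¹ * (∑ j, pd j (pd j (Uc u i)) x) + 6⁻¹ * pd i (dvg u) x := by
  funext x
  simp only [pd_eps hu]
  have e1 : ∀ j : Fin 3, pd j (pd i (Uc u j)) x = pd i (pd j (Uc u j)) x :=
    fun j => congrFun (pd_comm (hUc hu j) j i) x
  simp only [e1]
  have e2 : pd i (dvg u) x = ∑ j, pd i (pd j (Uc u j)) x := by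
    have : pd i (dvg u) = fun x => ∑ j, pd i (pd j (Uc u j)) x :=
      pd_sum_fun Finset.univ (fun j => pd j (Uc u j))
        (fun j _ => contDiff_pd (hUc hu j) j) i
    rw [this]
  rw [e2]
  rw [Finset.sum_add_distrib, Finset.sum_add_distrib, ← Finset.mul_sum, ← Finset.mul_sum]
  have e3 : ∑ j : Fin 3, (if i = j then -(3⁻¹:ℝ) else 0) * pd j (dvg u) x
      = -(3⁻¹:ℝ) * pd i (dvg u) x := by
    rw [Finset.sum_eq_single i]
    · simp
    · intro b _ hb; simp [Ne.symm hb]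
    · simp
  rw [e3, e2]
  ring

lemma sum_pd2_eps (hu : ContDiff ℝ (⊤ : ℕ∞) u) (i k : Fin 3) :
    (fun x => ∑ j, pd k (pd j (devDefEntry u i j)) x)
      = fun x => 2⁻¹ * (∑ j, pd k (pd j (pd j (Uc u i))) x) + 6⁻¹ * pd k (pd i (dvg u)) x := by
  have hS : ContDiff ℝ (⊤ : ℕ∞) (fun x => ∑ j, pd j (pd j (Uc u i)) x) :=
    ContDiff.sum fun j _ => contDiff_pd (contDiff_pd (hUc hu i) j) j
  have hg : ContDiff ℝ (⊤ : ℕ∞) (pd i (dvg u)) := contDiff_pd (hdvg hu) i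
  funext x
  have e1 : (fun x => ∑ j, pd k (pd j (devDefEntry u i j)) x)
      = pd k (fun y => ∑ j, pd j (devDefEntry u i j) y) := by
    rw [pd_sum_fun Finset.univ _ (fun j _ => contDiff_pd (hEps hu i j) j) k]
  rw [congrFun e1 x]
  have e2 : (fun y => ∑ j, pd j (devDefEntry u i j) y)
      = fun y => 2⁻¹ * (fun z => ∑ j, pd j (pd j (Uc u i)) z) y + 6⁻¹ * pd i (dvg u) y := by
    rw [sum_pd_eps hu i]
  rw [e2, pd_comb (hS.differentiable (by simp) x) (hg.differentiable (by simp) x) 2⁻¹ 6⁻¹ k]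
  rw [congrFun (pd_sum_fun Finset.univ _ (fun j _ => contDiff_pd (contDiff_pd (hUc hu i) j) j) k) x]

lemma sum_lap_eps (hu : ContDiff ℝ (⊤ : ℕ∞) u) (i k : Fin 3) :
    (fun x => ∑ p, pd p (pd p (devDefEntry u i k)) x)
      = fun x => 2⁻¹ * (∑ p, pd k (pd p (pd p (Uc u i))) x)
          + 2⁻¹ * (∑ p, pd i (pd p (pd p (Uc u k))) x)
          + (if i = k then -(3⁻¹:ℝ) else 0) * ∑ p, pd p (pd p (dvg u)) x := by
  funext x
  have e1 : ∀ p : Fin 3, pd p (pd p (devDefEntry u i k)) x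
      = 2⁻¹ * pd k (pd p (pd p (Uc u i))) x + 2⁻¹ * pd i (pd p (pd p (Uc u k))) x
        + (if i = k then -(3⁻¹:ℝ) else 0) * pd p (pd p (dvg u)) x := by
    intro p
    have : pd p (devDefEntry u i k) = fun y =>
        2⁻¹ * pd p (pd k (Uc u i)) y + 2⁻¹ * pd p (pd i (Uc u k)) y
          + (if i = k then -(3⁻¹:ℝ) else 0) * pd p (dvg u) y := pd_eps hu p i k
    rw [this, ← pds_single p]
    rw [pds_comb3 (contDiff_pd (contDiff_pd (hUc hu i) k) p)
      (contDiff_pd (contDiff_pd (hUc hu k) i) p) (contDiff_pd (hdvg hu) p)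
      2⁻¹ 2⁻¹ _ [p] x]
    simp only [pds_single]
    rw [pd_comm (hUc hu i) p k, pd_comm (contDiff_pd (hUc hu i) p) p k,
      pd_comm (hUc hu k) p i, pd_comm (contDiff_pd (hUc hu k) p) p i]
  simp only [e1]
  rw [Finset.sum_add_distrib, Finset.sum_add_distrib, ← Finset.mul_sum, ← Finset.mul_sum,
    ← Finset.mul_sum]

lemma divdiv_eps (hu : ContDiff ℝ (⊤ : ℕ∞) u) :
    (fun x => ∑ p, ∑ q, pd p (pd q (devDefEntry u p q)) x)
      = fun x => (2/3 : ℝ) * ∑ p, pd p (pd p (dvg u)) x := by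
  funext x
  have e1 : ∀ p : Fin 3, ∑ q, pd p (pd q (devDefEntry u p q)) x
      = 2⁻¹ * (∑ j, pd p (pd j (pd j (Uc u p))) x) + 6⁻¹ * pd p (pd p (dvg u)) x :=
    fun p => congrFun (sum_pd2_eps hu p p) x
  simp only [e1]
  have e2 : ∀ p j : Fin 3, pd p (pd j (pd j (Uc u p))) x
      = pd j (pd j (pd p (Uc u p))) x := by
    intro p j
    rw [pd_comm (contDiff_pd (hUc hu p) j) p j, pd_comm (hUc hu p) p j]
  have e3 : ∀ j : Fin 3, pd j (pd j (dvg u)) x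
      = ∑ p, pd j (pd j (pd p (Uc u p))) x := by
    intro j
    have h1 : pd j (dvg u) = fun y => ∑ p, pd j (pd p (Uc u p)) y :=
      pd_sum_fun Finset.univ _ (fun p _ => contDiff_pd (hUc hu p) p) j
    rw [h1, congrFun (pd_sum_fun Finset.univ _
      (fun p _ => contDiff_pd (contDiff_pd (hUc hu p) p) j) j) x]
  rw [Finset.sum_congr rfl (fun p _ => by rw [Finset.mul_sum, Finset.sum_congr rfl (fun j _ => by rw [e2 p j])] : ∀ p ∈ Finset.univ, (2⁻¹ * ∑ j, pd p (pd j (pd j (Uc u p))) x + 6⁻¹ * pd p (pd p (dvg u)) x) = ((∑ j, 2⁻¹ * pd j (pd j (pd p (Uc u p))) x) + 6⁻¹ * pd p (pd p (dvg u)) x))]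
  rw [Finset.sum_add_distrib, Finset.sum_comm]
  rw [Finset.sum_congr rfl (fun j _ => by rw [← Finset.mul_sum, ← e3 j] :
    ∀ j ∈ Finset.univ, (∑ p, 2⁻¹ * pd j (pd j (pd p (Uc u p))) x)
      = 2⁻¹ * pd j (pd j (dvg u)) x)]
  rw [← Finset.mul_sum, ← Finset.mul_sum]
  ring

lemma dd_dvg (hu : ContDiff ℝ (⊤ : ℕ∞) u) (i k : Fin 3) :
    pd i (pd k (dvg u)) = fun x =>
      3 * (∑ j, pd k (pd j (devDefEntry u i j)) x)
        + 3 * (∑ j, pd i (pd j (devDefEntry u k j)) x)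
        + (-3) * (∑ p, pd p (pd p (devDefEntry u i k)) x)
        + (if i = k then (-(3/2) : ℝ) else 0) * (∑ p, ∑ q, pd p (pd q (devDefEntry u p q)) x) := by
  funext x
  rw [congrFun (sum_pd2_eps hu i k) x, congrFun (sum_pd2_eps hu k i) x,
    congrFun (sum_lap_eps hu i k) x, congrFun (divdiv_eps hu) x,
    pd_comm (hdvg hu) k i]
  split_ifs <;> ring

/-- for `|α| ≥ 3`, `D^α u` is controlled by the derivatives
`D^β (dev def u)`, `|β| = |α| - 1`: if the latter all vanish at a point, so does
the former. -/
theorem higher_derivs_vanish_of_devDef (n : ℕ) (hn : 3 ≤ n)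
    (u : V3 → V3) (hu : ContDiff ℝ (⊤ : ℕ∞) u) (x₀ : V3)
    (h : ∀ l : List (Fin 3), l.length = n - 1 →
      ∀ i j : Fin 3, pds l (devDefEntry u i j) x₀ = 0) :
    ∀ l : List (Fin 3), l.length = n → ∀ m : Fin 3,
      pds l (fun y => u y m) x₀ = 0 := by
  have hE := hEps hu
  have hD := hdvg hu
  have hεl : ∀ (l₂ : List (Fin 3)) (a b i j : Fin 3), l₂.length = n - 3 →
      pds l₂ (pd a (pd b (devDefEntry u i j))) x₀ = 0 := by
    intro l₂ a b i j hl
    have hlen : (l₂ ++ [a, b]).length = n - 1 := by simp [hl]; omega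
    have := h (l₂ ++ [a, b]) hlen i j
    rwa [pds_append] at this
  have hε1 : ∀ (l₂ : List (Fin 3)) (a i j : Fin 3), l₂.length = n - 2 →
      pds l₂ (pd a (devDefEntry u i j)) x₀ = 0 := by
    intro l₂ a i j hl
    have hlen : (l₂ ++ [a]).length = n - 1 := by simp [hl]; omega
    have := h (l₂ ++ [a]) hlen i j
    rwa [pds_append] at this
  have hd2 : ∀ (l₁ : List (Fin 3)) (e c : Fin 3), l₁.length = n - 3 →
      pds l₁ (pd e (pd c (dvg u))) x₀ = 0 := by
    intro l₁ e c hl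
    rw [dd_dvg hu e c]
    have hS1 : ContDiff ℝ (⊤ : ℕ∞) (fun x => ∑ j, pd c (pd j (devDefEntry u e j)) x) :=
      ContDiff.sum fun j _ => contDiff_pd (contDiff_pd (hE e j) j) c
    have hS2 : ContDiff ℝ (⊤ : ℕ∞) (fun x => ∑ j, pd e (pd j (devDefEntry u c j)) x) :=
      ContDiff.sum fun j _ => contDiff_pd (contDiff_pd (hE c j) j) e
    have hS3 : ContDiff ℝ (⊤ : ℕ∞) (fun x => ∑ p, pd p (pd p (devDefEntry u e c)) x) :=
      ContDiff.sum fun p _ => contDiff_pd (contDiff_pd (hE e c) p) p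
    have hS4 : ContDiff ℝ (⊤ : ℕ∞) (fun x => ∑ p, ∑ q, pd p (pd q (devDefEntry u p q)) x) :=
      ContDiff.sum fun p _ => ContDiff.sum fun q _ => contDiff_pd (contDiff_pd (hE p q) q) p
    rw [pds_comb4 hS1 hS2 hS3 hS4 _ _ _ _ l₁ x₀]
    have z1 : pds l₁ (fun x => ∑ j, pd c (pd j (devDefEntry u e j)) x) x₀ = 0 := by
      rw [pds_sum Finset.univ _ (fun j _ => contDiff_pd (contDiff_pd (hE e j) j) c) l₁ x₀]
      exact Finset.sum_eq_zero fun j _ => hεl l₁ c j e j hl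
    have z2 : pds l₁ (fun x => ∑ j, pd e (pd j (devDefEntry u c j)) x) x₀ = 0 := by
      rw [pds_sum Finset.univ _ (fun j _ => contDiff_pd (contDiff_pd (hE c j) j) e) l₁ x₀]
      exact Finset.sum_eq_zero fun j _ => hεl l₁ e j c j hl
    have z3 : pds l₁ (fun x => ∑ p, pd p (pd p (devDefEntry u e c)) x) x₀ = 0 := by
      rw [pds_sum Finset.univ _ (fun p _ => contDiff_pd (contDiff_pd (hE e c) p) p) l₁ x₀]
      exact Finset.sum_eq_zero fun p _ => hεl l₁ p p e c hl
    have z4 : pds l₁ (fun x => ∑ p, ∑ q, pd p (pd q (devDefEntry u p q)) x) x₀ = 0 := by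
      rw [pds_sum Finset.univ _
        (fun p _ => ContDiff.sum fun q _ => contDiff_pd (contDiff_pd (hE p q) q) p) l₁ x₀]
      refine Finset.sum_eq_zero fun p _ => ?_
      rw [pds_sum Finset.univ _ (fun q _ => contDiff_pd (contDiff_pd (hE p q) q) p) l₁ x₀]
      exact Finset.sum_eq_zero fun q _ => hεl l₁ p q p q hl
    rw [z1, z2, z3, z4]
    ring
  have hd1 : ∀ (l₀ : List (Fin 3)) (c : Fin 3), l₀.length = n - 2 →
      pds l₀ (pd c (dvg u)) x₀ = 0 := by
    intro l₀ c hl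
    rcases List.eq_nil_or_concat l₀ with rfl | ⟨l₁, e, rfl⟩
    · simp at hl; omega
    · rw [List.concat_eq_append, pds_append]
      exact hd2 l₁ e c (by simp at hl ⊢; omega)
  intro l hlen m
  rcases List.eq_nil_or_concat l with rfl | ⟨l', b, rfl⟩
  · simp at hlen; omega
  rcases List.eq_nil_or_concat l' with rfl | ⟨l₀, a, rfl⟩
  · simp at hlen; omega
  have hl₀ : l₀.length = n - 2 := by simp at hlen; omega
  simp only [List.concat_eq_append] at hlen ⊢
  rw [List.append_assoc, pds_append]
  have e0 : pds ([a] ++ [b]) (fun y => u y m) = pd a (pd b (Uc u m)) := rfl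
  rw [e0, second_deriv_eq hu a b m]
  rw [pds_comb6 (contDiff_pd (hE b m) a) (contDiff_pd (hE a m) b) (contDiff_pd (hE a b) m)
    (contDiff_pd hD a) (contDiff_pd hD b) (contDiff_pd hD m) _ _ _ _ _ _ l₀ x₀]
  rw [hε1 l₀ a b m hl₀, hε1 l₀ b a m hl₀, hε1 l₀ m a b hl₀,
    hd1 l₀ a hl₀, hd1 l₀ b hl₀, hd1 l₀ m hl₀]
  ring
end
end
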